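/- arXiv:math/0603634 — 9 statements merged into one kernel-verified Lean document; each statement's English description precedes it below -/
import Mathlib

section
/- Let f : ℕ → ℕ be one-to-one and suppose there is no strictly increasing sequence x₁ < x₂ < ⋯ < x_{k+1} with f(x₁) > f(x₂) > ⋯ > f(x_{k+1}). Then there exist sets X₁, …, X_k with ℕ = X₁ ∪ ⋯ ∪ X_k such that f restricted to each Xᵢ is monotonically increasing. -/
private def dd (f : ℕ → ℕ) : ℕ → ℕ := fun n =>
  (((Finset.range n).filter (fun m => f n < f m)).attach.sup
    (fun m => dd f m.1)) + 1
decreasing_by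
  have h := m.2
  simp only [Finset.mem_filter, Finset.mem_range] at h
  exact h.1

private theorem dd_eq (f : ℕ → ℕ) (n : ℕ) :
    dd f n = (((Finset.range n).filter (fun m => f n < f m)).attach.sup
      (fun m => dd f m.1)) + 1 := by
  rw [dd]

private theorem dd_lt (f : ℕ → ℕ) {m n : ℕ} (hmn : m < n) (hfn : f n < f m) :
    dd f m < dd f n := by
  rw [dd_eq f n]
  have hmem : m ∈ (Finset.range n).filter (fun m => f n < f m) := by
    simp [Finset.mem_filter, Finset.mem_range, hmn, hfn]
  have := Finset.le_sup (f := fun m : {x // x ∈ (Finset.range n).filter (fun m => f n < f m)} => dd f m.1)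
    (Finset.mem_attach _ ⟨m, hmem⟩)
  exact Nat.lt_succ_of_le this

private theorem dd_chain (f : ℕ → ℕ) (n : ℕ) :
    ∃ (L : ℕ) (a : Fin (L + 1) → ℕ), L + 1 = dd f n ∧ StrictMono a ∧
      StrictAnti (fun i => f (a i)) ∧ a (Fin.last L) = n := by
  induction n using Nat.strong_induction_on with
  | _ n ih =>
    by_cases hne : ((Finset.range n).filter (fun m => f n < f m)).Nonempty
    · obtain ⟨m, _, hsup⟩ := Finset.exists_mem_eq_sup
        ((Finset.range n).filter (fun m => f n < f m)).attach
        (by simpa using hne) (fun x => dd f x.1)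
      have hm := m.2
      simp only [Finset.mem_filter, Finset.mem_range] at hm
      obtain ⟨L, a, hL, hmono, hanti, hlast⟩ := ih m.1 hm.1
      refine ⟨L + 1, fun i => if h : (i : ℕ) < L + 1 then a ⟨i, h⟩ else n, ?_, ?_, ?_, ?_⟩
      · rw [dd_eq f n, hsup, ← hL]
      · intro i j hij
        have hij' : (i : ℕ) < (j : ℕ) := hij
        by_cases hj : (j : ℕ) < L + 1
        · have hi : (i : ℕ) < L + 1 := by omega
          simp only [dif_pos hi, dif_pos hj]
          exact hmono hij'
        · have hi : (i : ℕ) < L + 1 := by omega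
          simp only [dif_pos hi, dif_neg hj]
          have : a ⟨i, hi⟩ ≤ a (Fin.last L) := hmono.monotone (by
            simp [Fin.le_def, Fin.last]; omega)
          rw [hlast] at this
          omega
      · intro i j hij
        have hij' : (i : ℕ) < (j : ℕ) := hij
        by_cases hj : (j : ℕ) < L + 1
        · have hi : (i : ℕ) < L + 1 := by omega
          simp only [dif_pos hi, dif_pos hj]
          exact hanti hij'
        · have hi : (i : ℕ) < L + 1 := by omega
          simp only [dif_pos hi, dif_neg hj]
          have : f (a (Fin.last L)) ≤ f (a ⟨i, hi⟩) := hanti.antitone (by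
            simp [Fin.le_def, Fin.last]; omega)
          rw [hlast] at this
          omega
      · simp [Fin.last]
    · refine ⟨0, fun _ => n, ?_, ?_, ?_, rfl⟩
      · rw [dd_eq f n, Finset.not_nonempty_iff_eq_empty.mp hne]
        simp
      · intro i j hij
        omega
      · intro i j hij
        omega

private theorem dd_le (f : ℕ → ℕ) (k : ℕ)
    (hP : ¬ ∃ a : Fin (k + 1) → ℕ, StrictMono a ∧ StrictAnti (fun i => f (a i)))
    (n : ℕ) : dd f n ≤ k := by
  by_contra h
  push_neg at h
  obtain ⟨L, a, hL, hmono, hanti, _⟩ := dd_chain f n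
  have hkL : k ≤ L := by omega
  refine hP ⟨fun i => a ⟨i, by omega⟩, ?_, ?_⟩
  · intro i j hij
    exact hmono (show ((⟨(i : ℕ), _⟩ : Fin (L + 1)) : Fin (L+1)) < ⟨(j : ℕ), _⟩ from hij)
  · intro i j hij
    exact hanti (show ((⟨(i : ℕ), _⟩ : Fin (L + 1)) : Fin (L+1)) < ⟨(j : ℕ), _⟩ from hij)

/-- If an injective `f : ℕ → ℕ` admits no strictly increasing sequence of `k+1`
arguments on which the values strictly decrease, then `ℕ` is a union of `k` sets
on each of which `f` is monotonically increasing. -/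
theorem stmt1 (f : ℕ → ℕ) (hf : Function.Injective f) (k : ℕ) (hk : 1 ≤ k)
    (hP : ¬ ∃ a : Fin (k + 1) → ℕ, StrictMono a ∧ StrictAnti (fun i => f (a i))) :
    ∃ X : Fin k → Set ℕ, (⋃ i, X i) = Set.univ ∧ ∀ i, MonotoneOn f (X i) := by
  refine ⟨fun i => {n | dd f n = (i : ℕ) + 1}, ?_, ?_⟩
  · ext n
    simp only [Set.mem_iUnion, Set.mem_univ, iff_true, Set.mem_setOf_eq]
    have h1 : 1 ≤ dd f n := by rw [dd_eq]; omega
    have h2 : dd f n ≤ k := dd_le f k hP n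
    refine ⟨⟨dd f n - 1, by omega⟩, ?_⟩
    show dd f n = dd f n - 1 + 1
    omega
  · intro i m hm n hn hmn
    simp only [Set.mem_setOf_eq] at hm hn
    rcases eq_or_lt_of_le hmn with rfl | hlt
    · exact le_refl _
    · by_contra hfn
      push_neg at hfn
      have := dd_lt f hlt hfn
      omega
end

section
/- Let X be a finite set of positive integers, f : X → ℕ injective, and k ≥ 1. Then f satisfies property P(k) (no increasing sequence x₁ < ⋯ < x_{k+1} in X with f(x₁) > ⋯ > f(x_{k+1})) if and only if X can be partitioned into k subsets on each of which f is monotonically increasing. -/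
/-- For a finite set `X` of positive integers and an injective `f : X → ℕ`,
property `P(k)` (no increasing chain of `k+1` elements of `X` with strictly
decreasing values) holds iff `X` is a union of `k` subsets on each of which `f`
is monotonically increasing. -/
theorem stmt2 (X : Finset ℕ) (hX : ∀ x ∈ X, 0 < x) (f : ℕ → ℕ)
    (hf : Set.InjOn f X) (k : ℕ) (hk : 1 ≤ k) :
    (¬ ∃ a : Fin (k + 1) → ℕ, (∀ i, a i ∈ X) ∧ StrictMono a ∧
        StrictAnti (fun i => f (a i))) ↔
      ∃ Y : Fin k → Set ℕ, (⋃ i, Y i) = ↑X ∧ ∀ i, MonotoneOn f (Y i) := by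
  constructor
  · intro hP
    -- chains ending at x
    set S : ℕ → Set ℕ := fun x => { n : ℕ | ∃ a : Fin (n + 1) → ℕ,
      (∀ i, a i ∈ X) ∧ StrictMono a ∧ StrictAnti (fun i => f (a i)) ∧
      a (Fin.last n) = x } with hS
    have hS0 : ∀ x ∈ X, 0 ∈ S x := by
      intro x hx
      refine ⟨fun _ => x, fun _ => hx,
        fun i j h => absurd (Fin.lt_iff_val_lt_val.mp h) (by omega),
        fun i j h => absurd (Fin.lt_iff_val_lt_val.mp h) (by omega), rfl⟩
    have hSbdd : ∀ x, ∀ n ∈ S x, n ≤ k - 1 := by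
      intro x n hn
      by_contra h
      push_neg at h
      have hkn : k ≤ n := by omega
      obtain ⟨a, ha, hmono, hanti, _⟩ := hn
      exact hP ⟨a ∘ Fin.castLE (by omega), fun i => ha _,
        hmono.comp (Fin.strictMono_castLE _), hanti.comp_strictMono (Fin.strictMono_castLE _)⟩
    set L : ℕ → ℕ := fun x => sSup (S x) with hL
    have hLmem : ∀ x ∈ X, L x ∈ S x := by
      intro x hx
      exact Nat.sSup_mem ⟨0, hS0 x hx⟩ ⟨k - 1, fun n hn => hSbdd x n hn⟩
    have hLle : ∀ x ∈ X, L x ≤ k - 1 := fun x hx => hSbdd x _ (hLmem x hx)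
    -- extension: x < y, f x > f y ⇒ L x + 1 ∈ S y
    have hext : ∀ x ∈ X, ∀ y ∈ X, x < y → f y < f x → L x + 1 ∈ S y := by
      intro x hx y hy hxy hfy
      obtain ⟨a, ha, hmono, hanti, hlast⟩ := hLmem x hx
      refine ⟨Fin.snoc a y, ?_, ?_, ?_, by simp⟩
      · intro i
        refine Fin.lastCases ?_ ?_ i
        · simp [hy]
        · intro j; simpa using ha j
      · intro i j hij
        rcases Fin.eq_castSucc_or_eq_last j with ⟨j', rfl⟩ | rfl
        · obtain ⟨i', rfl⟩ : ∃ i', i = Fin.castSucc i' := by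
            refine Fin.eq_castSucc_or_eq_last i |>.resolve_right ?_
            rintro rfl
            exact absurd hij (by simp [Fin.lt_iff_val_lt_val] <;> omega)
          simpa [Fin.snoc_castSucc] using hmono (by exact_mod_cast hij)
        · obtain ⟨i', rfl⟩ : ∃ i', i = Fin.castSucc i' := by
            refine Fin.eq_castSucc_or_eq_last i |>.resolve_right ?_
            rintro rfl; exact absurd hij (lt_irrefl _)
          simp only [Fin.snoc_castSucc, Fin.snoc_last]
          calc a i' ≤ a (Fin.last _) := hmono.monotone (Fin.le_last _)
            _ = x := hlast
            _ < y := hxy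
      · intro i j hij
        rcases Fin.eq_castSucc_or_eq_last j with ⟨j', rfl⟩ | rfl
        · obtain ⟨i', rfl⟩ : ∃ i', i = Fin.castSucc i' := by
            refine Fin.eq_castSucc_or_eq_last i |>.resolve_right ?_
            rintro rfl
            exact absurd hij (by simp [Fin.lt_iff_val_lt_val] <;> omega)
          simpa [Fin.snoc_castSucc] using hanti (show i' < j' by exact_mod_cast hij)
        · obtain ⟨i', rfl⟩ : ∃ i', i = Fin.castSucc i' := by
            refine Fin.eq_castSucc_or_eq_last i |>.resolve_right ?_
            rintro rfl; exact absurd hij (lt_irrefl _)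
          simp only [Fin.snoc_castSucc, Fin.snoc_last]
          calc f y < f x := hfy
            _ = f (a (Fin.last _)) := by rw [hlast]
            _ ≤ f (a i') := (hanti.antitone (Fin.le_last _))
    refine ⟨fun i => { x | x ∈ X ∧ L x = i }, ?_, ?_⟩
    · ext x
      simp only [Set.mem_iUnion, Set.mem_setOf_eq, Finset.coe_mem, Finset.mem_coe]
      constructor
      · rintro ⟨i, hx, _⟩; exact hx
      · intro hx
        exact ⟨⟨L x, by have := hLle x hx; omega⟩, hx, rfl⟩
    · rintro i x ⟨hx, hLx⟩ y ⟨hy, hLy⟩ hxy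
      rcases eq_or_lt_of_le hxy with rfl | hlt
      · exact le_refl _
      by_contra h
      push_neg at h
      have : L x + 1 ∈ S y := hext x hx y hy hlt h
      have : L x + 1 ≤ L y :=
        le_csSup ⟨k - 1, fun n hn => hSbdd y n hn⟩ this
      rw [hLx, hLy] at this
      omega
  · rintro ⟨Y, hY, hmono⟩ ⟨a, ha, hamono, haanti⟩
    have hchoice : ∀ i : Fin (k + 1), ∃ j : Fin k, a i ∈ Y j := by
      intro i
      have : a i ∈ (⋃ j, Y j) := hY ▸ (by exact_mod_cast ha i)
      simpa using this
    choose g hg using hchoice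
    have hcard : Fintype.card (Fin k) < Fintype.card (Fin (k + 1)) := by simp
    obtain ⟨i, j, hne, heq⟩ := Fintype.exists_ne_map_eq_of_card_lt g hcard
    rcases hne.lt_or_gt with hij | hij
    · have h1 : a i < a j := hamono hij
      have h2 : f (a j) < f (a i) := haanti hij
      have := hmono (g i) (hg i) (heq ▸ hg j) h1.le
      omega
    · have h1 : a j < a i := hamono hij
      have h2 : f (a i) < f (a j) := haanti hij
      have := hmono (g j) (hg j) (heq ▸ hg i) h1.le
      omega
end

section
/- Define h : ℕ → ℕ by h(n) = m(m+1)/2 − ℓ, where m is the unique positive integer with m(m−1)/2 < n ≤ m(m+1)/2 and ℓ = m(m+1)/2 − n. Then for every k, h is not k-monotonically increasing. -/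
/-- The `m`-th triangular number `m(m+1)/2`. -/
def tri (m : ℕ) : ℕ := m * (m + 1) / 2

lemma exists_le_tri (n : ℕ) : ∃ m, n ≤ tri m := by
  refine ⟨2 * n, ?_⟩
  have h : tri (2 * n) = n * (2 * n + 1) := by
    unfold tri
    rw [show 2 * n * (2 * n + 1) = n * (2 * n + 1) * 2 by ring,
      Nat.mul_div_cancel _ two_pos]
  rw [h]
  exact Nat.le_mul_of_pos_right n (by omega)

/-- The block index of `n`: the least `m` with `n ≤ tri m`. -/
def blk (n : ℕ) : ℕ := Nat.find (exists_le_tri n)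


/-- `h` lists each block `(tri (m-1), tri m]` in decreasing order:
`1; 3,2; 6,5,4; 10,9,8,7; …`. -/
def h (n : ℕ) : ℕ := tri (blk n - 1) + 1 + (tri (blk n) - n)


lemma tri_mono : Monotone tri := fun a b hab =>
  Nat.div_le_div_right (Nat.mul_le_mul hab (by omega))

lemma tri_succ (m : ℕ) : tri (m+1) = tri m + (m+1) := by
  unfold tri
  have h2 : 2 ∣ m * (m+1) := (Nat.even_mul_succ_self m).two_dvd
  have h3 : (m+1) * (m+1+1) = m * (m+1) + 2*(m+1) := by ring
  omega

lemma blk_eq {m n : ℕ} (hm : 1 ≤ m) (h1 : tri (m-1) < n) (h2 : n ≤ tri m) :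
    blk n = m := by
  have hle : blk n ≤ m := Nat.find_le h2
  have hspec : n ≤ tri (blk n) := Nat.find_spec (exists_le_tri n)
  have hge : m ≤ blk n := by
    by_contra hlt
    push_neg at hlt
    have : n ≤ tri (m-1) := le_trans hspec (tri_mono (by omega))
    omega
  omega

/-- For every `k`, `h` is not `k`-monotonically increasing: the positive integers
cannot be covered by `k` sets on each of which `h` is monotonically increasing. -/
theorem stmt6 (k : ℕ) :
    ¬ ∃ X : Fin k → Set ℕ, {n : ℕ | 0 < n} ⊆ (⋃ i, X i) ∧
      ∀ i, MonotoneOn h (X i) := by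
  rintro ⟨X, hcov, hmono⟩
  -- the k+1 elements of the (k+1)-st block
  have hmem : ∀ j : Fin (k+1), ∃ i, tri k + 1 + j.val ∈ X i := by
    intro j
    have : tri k + 1 + j.val ∈ ⋃ i, X i := hcov (by simp)
    simpa using this
  choose f hf using hmem
  obtain ⟨a, b, hab, hfab⟩ := Fintype.exists_ne_map_eq_of_card_lt f (by simp)
  -- wlog a.val < b.val
  wlog hlt : a.val < b.val generalizing a b
  · exact this b a (Ne.symm hab) hfab.symm
      (by have := Fin.val_ne_of_ne hab; omega)
  · have hb : tri k + 1 + b.val ∈ X (f a) := hfab ▸ hf b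
    have hmle := hmono (f a) (hf a) hb (by omega)
    have hba : ∀ j : Fin (k+1), blk (tri k + 1 + j.val) = k + 1 := by
      intro j
      apply blk_eq (by omega)
      · simpa using Nat.lt_of_lt_of_le (Nat.lt_succ_self _) (by omega)
      · have := tri_succ k
        have := j.isLt
        omega
    have hha : h (tri k + 1 + a.val) = tri k + 1 + (tri (k+1) - (tri k + 1 + a.val)) := by
      unfold h; rw [hba a]; simp
    have hhb : h (tri k + 1 + b.val) = tri k + 1 + (tri (k+1) - (tri k + 1 + b.val)) := by
      unfold h; rw [hba b]; simp
    have hts := tri_succ k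
    have hbl := b.isLt
    omega
end

section
/- There is no surjective function f : ℕ → ℚ that is k-monotonic for any k; that is, if f : ℕ → ℚ and ℕ = X₁ ∪ ⋯ ∪ X_k with f monotonic (increasing or decreasing) on each Xᵢ, then f is not onto ℚ. -/
open Classical in
lemma shrink_one (f : ℕ → ℚ) (T : Set ℕ)
    (h : MonotoneOn f T ∨ AntitoneOn f T) (a b : ℚ) (hab : a < b) :
    ∃ a' b', a ≤ a' ∧ b' ≤ b ∧ a' < b' ∧ ∀ n ∈ T, f n ∉ Set.Ioo a' b' := by
  by_cases hN : ∃ n, n ∈ T ∧ f n ∈ Set.Ioo a b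
  · set n₀ := Nat.find hN with hn₀def
    have h₀ := Nat.find_spec hN
    rcases h with hm | hm
    · refine ⟨a, f n₀, le_rfl, le_of_lt h₀.2.2, h₀.2.1, ?_⟩
      intro n hn hfn
      have hP : n ∈ T ∧ f n ∈ Set.Ioo a b := ⟨hn, hfn.1, lt_trans hfn.2 h₀.2.2⟩
      have hle : n₀ ≤ n := Nat.find_min' hN hP
      exact absurd hfn.2 (not_lt.mpr (hm h₀.1 hn hle))
    · refine ⟨f n₀, b, le_of_lt h₀.2.1, le_rfl, h₀.2.2, ?_⟩
      intro n hn hfn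
      have hP : n ∈ T ∧ f n ∈ Set.Ioo a b := ⟨hn, lt_trans h₀.2.1 hfn.1, hfn.2⟩
      have hle : n₀ ≤ n := Nat.find_min' hN hP
      exact absurd hfn.1 (not_lt.mpr (hm h₀.1 hn hle))
  · exact ⟨a, b, le_rfl, le_rfl, hab, fun n hn hfn => hN ⟨n, hn, hfn⟩⟩

lemma shrink_all (f : ℕ → ℚ) : ∀ (k : ℕ) (X : Fin k → Set ℕ),
    (∀ i, MonotoneOn f (X i) ∨ AntitoneOn f (X i)) →
    ∀ a b : ℚ, a < b → ∃ a' b', a ≤ a' ∧ b' ≤ b ∧ a' < b' ∧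
      ∀ i, ∀ n ∈ X i, f n ∉ Set.Ioo a' b' := by
  intro k
  induction k with
  | zero => exact fun X _ a b hab => ⟨a, b, le_rfl, le_rfl, hab, fun i => i.elim0⟩
  | succ k ih =>
    intro X hm a b hab
    obtain ⟨a₁, b₁, ha₁, hb₁, h₁, hdis⟩ :=
      ih (fun i => X i.succ) (fun i => hm i.succ) a b hab
    obtain ⟨a₂, b₂, ha₂, hb₂, h₂, hdis₂⟩ := shrink_one f (X 0) (hm 0) a₁ b₁ h₁
    refine ⟨a₂, b₂, le_trans ha₁ ha₂, le_trans hb₂ hb₁, h₂, ?_⟩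
    intro i
    refine Fin.cases ?_ ?_ i
    · exact hdis₂
    · intro j n hn hfn
      exact hdis j n hn ⟨lt_of_le_of_lt ha₂ hfn.1, lt_of_lt_of_le hfn.2 hb₂⟩

/-- No `k`-monotonic function `f : ℕ → ℚ` is surjective: if `ℕ` is a union of
`k` sets on each of which `f` is monotonically increasing or monotonically
decreasing, then `f` is not onto `ℚ`. -/
theorem stmt8 (f : ℕ → ℚ) (k : ℕ) (X : Fin k → Set ℕ)
    (hcover : (⋃ i, X i) = Set.univ)
    (hmono : ∀ i, MonotoneOn f (X i) ∨ AntitoneOn f (X i)) :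
    ¬ Function.Surjective f := by
  intro hsurj
  obtain ⟨a, b, _, _, hab, hdis⟩ :=
    shrink_all f k X hmono 0 1 (by norm_num)
  obtain ⟨n, hn⟩ := hsurj ((a + b) / 2)
  have hmem : n ∈ ⋃ i, X i := by rw [hcover]; trivial
  obtain ⟨_, ⟨i, rfl⟩, hni⟩ := hmem
  exact hdis i n hni (by rw [hn]; constructor <;> linarith)
end

section
/- Suppose ℕ = X₁ ∪ ⋯ ∪ X_k and f : ℕ → ℚ is monotonic on each Xᵢ. Then there exists a rational number m* such that the set f(ℕ) ∩ (m*, m*+1) is finite. -/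
/-- If `ℕ = X₁ ∪ ⋯ ∪ X_k` and `f : ℕ → ℚ` is monotonic on each `Xᵢ`, then there
is a rational `m*` such that `f(ℕ) ∩ (m*, m*+1)` is finite. -/
theorem stmt11 (f : ℕ → ℚ) (k : ℕ) (X : Fin k → Set ℕ)
    (hcover : (⋃ i, X i) = Set.univ)
    (hmono : ∀ i, MonotoneOn f (X i) ∨ AntitoneOn f (X i)) :
    ∃ m : ℚ, {q : ℚ | q ∈ Set.range f ∧ m < q ∧ q < m + 1}.Finite := by
  classical
  -- For each i, find a bound B such that for every m ≥ B the piece contributes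
  -- only finitely many values to (m, m+1).
  have key : ∀ i : Fin k, ∃ B : ℚ, ∀ m : ℚ, B ≤ m →
      {q : ℚ | q ∈ f '' X i ∧ m < q ∧ q < m + 1}.Finite := by
    intro i
    by_cases hb : ∃ b : ℚ, ∀ n ∈ X i, f n ≤ b
    · obtain ⟨b, hbs⟩ := hb
      refine ⟨b, fun m hm => ?_⟩
      have : {q : ℚ | q ∈ f '' X i ∧ m < q ∧ q < m + 1} = ∅ := by
        ext q
        simp only [Set.mem_setOf_eq, Set.mem_empty_iff_false, iff_false]
        rintro ⟨⟨n, hn, rfl⟩, h1, h2⟩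
        exact absurd h1 (not_lt.2 ((hbs n hn).trans hm))
      rw [this]; exact Set.finite_empty
    · -- unbounded above: must be monotone
      have hmon : MonotoneOn f (X i) := by
        rcases hmono i with h | h
        · exact h
        · exfalso
          rcases Set.eq_empty_or_nonempty (X i) with he | hne
          · exact hb ⟨0, by simp [he]⟩
          · exact hb ⟨f (sInf (X i)), fun n hn =>
              h (Nat.sInf_mem hne) hn (Nat.sInf_le hn)⟩
      refine ⟨0, fun m _ => ?_⟩
      push_neg at hb
      obtain ⟨n₀, hn₀, hfn₀⟩ := hb (m + 1)
      have hfin : (f '' (X i ∩ Set.Iio n₀)).Finite :=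
        ((Set.finite_Iio n₀).inter_of_right (X i)).image f
      refine hfin.subset ?_
      rintro q ⟨⟨n, hn, rfl⟩, h1, h2⟩
      refine ⟨n, ⟨hn, ?_⟩, rfl⟩
      by_contra hlt
      exact absurd (hmon hn₀ hn (not_lt.1 (fun h => hlt (Set.mem_Iio.2 h)))) (not_le.2 (h2.trans hfn₀))
  choose B hB using key
  -- k must be positive since the union covers ℕ
  have h0 : (0 : ℕ) ∈ ⋃ i, X i := hcover ▸ Set.mem_univ 0
  obtain ⟨i₀, hi₀⟩ := Set.mem_iUnion.1 h0
  haveI : Nonempty (Fin k) := ⟨i₀⟩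
  set m := Finset.univ.sup' Finset.univ_nonempty B with hm
  refine ⟨m, ?_⟩
  have hsub : {q : ℚ | q ∈ Set.range f ∧ m < q ∧ q < m + 1} ⊆
      ⋃ i, {q : ℚ | q ∈ f '' X i ∧ m < q ∧ q < m + 1} := by
    rintro q ⟨⟨n, rfl⟩, h1, h2⟩
    have : n ∈ ⋃ i, X i := hcover ▸ Set.mem_univ n
    obtain ⟨i, hi⟩ := Set.mem_iUnion.1 this
    exact Set.mem_iUnion.2 ⟨i, ⟨n, hi, rfl⟩, h1, h2⟩
  exact (Set.finite_iUnion fun i =>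
    hB i m (Finset.le_sup' B (Finset.mem_univ i))).subset hsub
end

section
/- If ℕ = X₁ ∪ ⋯ ∪ X_k and f : ℕ → ℚ is monotonic on each Xᵢ, then there are at most k points p ∈ ℝ ∪ {±∞} such that every neighborhood of p contains infinitely many values of f; consequently there exists a rational q and an open neighborhood U of q with U ∩ f(ℕ) ⊆ {q}, so f is not surjective onto ℚ. -/
/-!
On a piece where `f` is monotone, the values (viewed in the complete order `EReal`) can
accumulate only at their supremum: a point below it lies below some value `f n`, and then all
values come from the finitely many earlier indices or lie in the closed ray `[f n, ∞]`.
Accumulation points of a finite union are those of the pieces, so there are at most `k`.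
A rational avoiding them is isolated from `f(ℕ)`, and `ℚ` has no isolated points.
-/

open Filter Set Topology

section DerivedSet

variable {X : Type*} [TopologicalSpace X]

theorem Set.Finite.derivedSet_eq_empty [T1Space X] {A : Set X} (hA : A.Finite) :
    derivedSet A = ∅ := by
  refine eq_empty_of_forall_notMem fun x hx => ?_
  rw [mem_derivedSet, accPt_principal_iff_clusterPt, ← mem_closure_iff_clusterPt,
    hA.sdiff.isClosed.closure_eq] at hx
  exact hx.2 rfl

theorem derivedSet_iUnion {ι : Type*} [Finite ι] (A : ι → Set X) :
    derivedSet (⋃ i, A i) = ⋃ i, derivedSet (A i) := by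
  ext x
  simp only [mem_derivedSet, accPt_iff_frequently, mem_iUnion, ← exists_and_left,
    frequently_exists]

theorem exists_isOpen_inter_subset_singleton {A : Set X} {x : X} (hx : x ∉ derivedSet A) :
    ∃ U : Set X, IsOpen U ∧ x ∈ U ∧ U ∩ A ⊆ {x} := by
  simp only [mem_derivedSet, accPt_iff_nhds, not_forall, not_exists, not_and, not_not] at hx
  obtain ⟨V, hV, hVA⟩ := hx
  obtain ⟨U, hUV, hU, hxU⟩ := mem_nhds_iff.mp hV
  exact ⟨U, hU, hxU, fun y hy => hVA y ⟨hUV hy.1, hy.2⟩⟩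

end DerivedSet

section MonotoneOn

variable {α β : Type*} [CompleteLinearOrder α] [TopologicalSpace α] [OrderTopology α]
  [LinearOrder β] [LocallyFiniteOrderBot β] {g : β → α} {s : Set β}

theorem MonotoneOn.derivedSet_image_subset (hg : MonotoneOn g s) :
    derivedSet (g '' s) ⊆ {sSup (g '' s)} := by
  intro p hp
  have hle : p ≤ sSup (g '' s) :=
    closure_minimal (fun _ => le_sSup) isClosed_Iic (derivedSet_subset_closure _ hp)
  refine hle.eq_or_lt.resolve_right fun hlt => ?_
  obtain ⟨_, ⟨n, hn, rfl⟩, hpn⟩ := lt_sSup_iff.mp hlt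
  have hsplit : g '' s ⊆ g '' (s ∩ Iio n) ∪ Ici (g n) := by
    rintro _ ⟨m, hm, rfl⟩
    rcases lt_or_ge m n with hmn | hnm
    · exact Or.inl ⟨m, ⟨hm, hmn⟩, rfl⟩
    · exact Or.inr (hg hn hm hnm)
  have hp_ray := derivedSet_mono _ _ hsplit hp
  rw [derivedSet_union, ((finite_Iio n).inter_of_right s |>.image g).derivedSet_eq_empty,
    empty_union] at hp_ray
  exact hpn.not_ge ((isClosed_iff_derivedSet_subset _).mp isClosed_Ici hp_ray)

theorem AntitoneOn.derivedSet_image_subset (hg : AntitoneOn g s) :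
    derivedSet (g '' s) ⊆ {sInf (g '' s)} :=
  MonotoneOn.derivedSet_image_subset (α := αᵒᵈ) hg.dual_right

end MonotoneOn

theorem exists_finset_derivedSet_range_subset {α β ι : Type*} [CompleteLinearOrder α]
    [TopologicalSpace α] [OrderTopology α] [LinearOrder β] [LocallyFiniteOrderBot β] [Fintype ι]
    {g : β → α} {X : ι → Set β} (hcover : ⋃ i, X i = univ)
    (hmono : ∀ i, MonotoneOn g (X i) ∨ AntitoneOn g (X i)) :
    ∃ S : Finset α, S.card ≤ Fintype.card ι ∧ derivedSet (range g) ⊆ S := by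
  classical
  have hpiece : ∀ i, ∃ L, derivedSet (g '' X i) ⊆ {L} := fun i =>
    (hmono i).elim (fun h => ⟨_, h.derivedSet_image_subset⟩)
      (fun h => ⟨_, h.derivedSet_image_subset⟩)
  choose L hL using hpiece
  refine ⟨Finset.univ.image L, Finset.card_image_le, ?_⟩
  rw [← image_univ, ← hcover, image_iUnion, derivedSet_iUnion]
  simpa using iUnion_mono hL

/-- If `ℕ = X₁ ∪ ⋯ ∪ X_k` and `f : ℕ → ℚ` is monotonic on each `Xᵢ`, then the
values of `f` have at most `k` limit points in `ℝ ∪ {±∞}`; consequently some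
rational `q` has an open neighborhood `U` with `U ∩ f(ℕ) ⊆ {q}`, and `f` is not
surjective onto `ℚ`. -/
theorem stmt13 (f : ℕ → ℚ) (k : ℕ) (X : Fin k → Set ℕ)
    (hcover : (⋃ i, X i) = Set.univ)
    (hmono : ∀ i, MonotoneOn f (X i) ∨ AntitoneOn f (X i)) :
    (∃ S : Finset EReal, S.card ≤ k ∧
      {p : EReal | AccPt p (Filter.principal
        ((fun q : ℚ => ((q : ℝ) : EReal)) '' Set.range f))} ⊆ ↑S) ∧
    (∃ q : ℚ, ∃ U : Set ℚ, IsOpen U ∧ q ∈ U ∧ U ∩ Set.range f ⊆ {q}) ∧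
    ¬ Function.Surjective f := by
  set e : ℚ → EReal := fun q : ℚ => ((q : ℝ) : EReal)
  have he : StrictMono e := EReal.coe_strictMono.comp Rat.cast_strictMono
  have he_cont : Continuous e := continuous_coe_real_ereal.comp Rat.continuous_coe_real
  obtain ⟨S, hSk, hS⟩ := exists_finset_derivedSet_range_subset (g := e ∘ f) hcover
    fun i => (hmono i).imp he.monotone.comp_monotoneOn he.monotone.comp_antitoneOn
  rw [range_comp] at hS
  rw [Fintype.card_fin] at hSk
  obtain ⟨_, ⟨q, rfl⟩, hqS⟩ := (infinite_range_of_injective he.injective).exists_notMem_finset S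
  have hq : q ∉ derivedSet (range f) := fun h =>
    hqS (hS (he_cont.image_derivedSet he.injective ⟨q, h, rfl⟩))
  obtain ⟨U, hU, hqU, hUf⟩ := exists_isOpen_inter_subset_singleton hq
  refine ⟨⟨S, hSk, hS⟩, ⟨q, U, hU, hqU, hUf⟩, fun hsurj => not_isOpen_singleton q ?_⟩
  rw [hsurj.range_eq, inter_univ] at hUf
  rwa [← hUf.antisymm (singleton_subset_iff.mpr hqU)]
end

section
/- Let I be an interval of rational numbers, i.e., I = 𝒥 ∩ ℚ where 𝒥 is a real interval with nonempty interior. Then no function f : ℕ → ℚ that is k-monotonic for some k maps ℕ onto I. -/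
lemma shrink14 {f : ℕ → ℚ} {X : Set ℕ} (h : MonotoneOn f X ∨ AntitoneOn f X)
    {c d : ℚ} (hcd : c < d) :
    ∃ c' d', c' < d' ∧ Set.Ioo c' d' ⊆ Set.Ioo c d ∧ ∀ n ∈ X, f n ∉ Set.Ioo c' d' := by
  classical
  by_cases hT : ∃ n, n ∈ X ∧ f n ∈ Set.Ioo c d
  · set n := Nat.find hT with hn
    obtain ⟨hnX, hfn⟩ := Nat.find_spec hT
    rcases h with hm | hm
    · refine ⟨c, f n, hfn.1, fun x hx => ⟨hx.1, hx.2.trans hfn.2⟩, ?_⟩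
      intro m hmX hfm
      have hmem : f m ∈ Set.Ioo c d := ⟨hfm.1, hfm.2.trans hfn.2⟩
      have : n ≤ m := Nat.find_min' hT ⟨hmX, hmem⟩
      exact absurd (hm hnX hmX this) (not_le.mpr hfm.2)
    · refine ⟨f n, d, hfn.2, fun x hx => ⟨hfn.1.trans hx.1, hx.2⟩, ?_⟩
      intro m hmX hfm
      have hmem : f m ∈ Set.Ioo c d := ⟨hfn.1.trans hfm.1, hfm.2⟩
      have : n ≤ m := Nat.find_min' hT ⟨hmX, hmem⟩
      exact absurd (hm hnX hmX this) (not_le.mpr hfm.1)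
  · exact ⟨c, d, hcd, subset_rfl, fun m hm hfm => hT ⟨m, hm, hfm⟩⟩

lemma avoid14 (f : ℕ → ℚ) : ∀ (k : ℕ) (X : Fin k → Set ℕ),
    (∀ i, MonotoneOn f (X i) ∨ AntitoneOn f (X i)) →
    ∀ c d : ℚ, c < d → ∃ q ∈ Set.Ioo c d, ∀ i, ∀ n ∈ X i, f n ≠ q := by
  intro k
  induction k with
  | zero =>
    intro X _ c d hcd
    exact ⟨(c + d) / 2, ⟨by linarith, by linarith⟩, fun i => i.elim0⟩
  | succ k ih =>
    intro X hmono c d hcd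
    obtain ⟨c', d', h1, h2, h3⟩ := shrink14 (hmono 0) hcd
    obtain ⟨q, hq, hq2⟩ := ih (fun i => X i.succ) (fun i => hmono i.succ) c' d' h1
    refine ⟨q, h2 hq, fun i => ?_⟩
    refine Fin.cases ?_ ?_ i
    · intro m hm hfm
      exact h3 m hm (hfm ▸ hq)
    · intro j
      exact hq2 j

/-- No `k`-monotonic function `f : ℕ → ℚ` maps `ℕ` onto an interval of rational
numbers, i.e. onto `𝒥 ∩ ℚ` for a real interval `𝒥` with nonempty interior. -/
theorem stmt14 (J : Set ℝ) (hJ : J.OrdConnected) (hJ' : (interior J).Nonempty)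
    (f : ℕ → ℚ) (k : ℕ) (X : Fin k → Set ℕ)
    (hcover : (⋃ i, X i) = Set.univ)
    (hmono : ∀ i, MonotoneOn f (X i) ∨ AntitoneOn f (X i)) :
    Set.range f ≠ {q : ℚ | (q : ℝ) ∈ J} := by
  intro hEq
  obtain ⟨x, hx⟩ := hJ'
  have hJx : J ∈ nhds x := mem_interior_iff_mem_nhds.mp hx
  obtain ⟨ε, hε, hball⟩ := Metric.mem_nhds_iff.mp hJx
  have hlu : Set.Ioo (x - ε) (x + ε) ⊆ J := by
    rw [← Real.ball_eq_Ioo]; exact hball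
  have hxlu : x ∈ Set.Ioo (x - ε) (x + ε) := ⟨by linarith, by linarith⟩
  obtain ⟨a, hla, hax⟩ := exists_rat_btwn hxlu.1
  obtain ⟨b, hxb, hbu⟩ := exists_rat_btwn hxlu.2
  have hab : a < b := by exact_mod_cast hax.trans hxb
  obtain ⟨q, hq, hq2⟩ := avoid14 f k X hmono a b hab
  have hqJ : (q : ℝ) ∈ J := by
    apply hlu
    constructor
    · exact hla.trans (by exact_mod_cast hq.1)
    · exact (show (q:ℝ) < b by exact_mod_cast hq.2).trans hbu
  have : q ∈ Set.range f := hEq ▸ hqJ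
  obtain ⟨n, hn⟩ := this
  have : n ∈ ⋃ i, X i := hcover ▸ Set.mem_univ n
  obtain ⟨i, hi⟩ := Set.mem_iUnion.mp this
  exact hq2 i n hi hn
end

section
/- Let f : ℕ → ℕ be injective and satisfy property P(k). Then the greedy record sequence a₁ = 1, a_{n+1} = least m with f(m) > f(aₙ), is well-defined for all n (each aₙ exists), and f is strictly increasing along it. -/
/-- For an injective `f : ℕ → ℕ` satisfying property `P(k)`, the greedy record
sequence `a 0 = 1`, `a (n+1) =` the least `m` with `a n < m` and `f m > f (a n)`,
is well-defined for all `n`, and `f` is strictly increasing along it. -/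
theorem stmt16 (f : ℕ → ℕ) (hf : Function.Injective f) (k : ℕ)
    (hP : ¬ ∃ x : Fin (k + 1) → ℕ, StrictMono x ∧ StrictAnti (fun i => f (x i))) :
    ∃ a : ℕ → ℕ, a 0 = 1 ∧ StrictMono a ∧ StrictMono (fun n => f (a n)) ∧
      ∀ n m, a n < m → f (a n) < f m → a (n + 1) ≤ m := by
  classical
  have key : ∀ x : ℕ, ∃ m, x < m ∧ f x < f m := by
    intro x
    have hfin : (f ⁻¹' Set.Iic (f x)).Finite :=
      Set.Finite.preimage (Set.injOn_of_injective hf) (Set.finite_Iic _)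
    obtain ⟨b, hb⟩ := hfin.bddAbove
    refine ⟨b + x + 1, by omega, ?_⟩
    by_contra h
    push_neg at h
    have hmem : b + x + 1 ∈ f ⁻¹' Set.Iic (f x) := h
    have := hb hmem
    omega
  let a : ℕ → ℕ := fun n => Nat.rec (motive := fun _ => ℕ) 1 (fun _ an => Nat.find (key an)) n
  have h1 : ∀ n, a n < a (n + 1) ∧ f (a n) < f (a (n + 1)) := by
    intro n
    exact Nat.find_spec (key (a n))
  exact ⟨a, rfl, strictMono_nat_of_lt_succ (fun n => (h1 n).1),
    strictMono_nat_of_lt_succ (fun n => (h1 n).2),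
    fun n m hm hfm => Nat.find_min' (key (a n)) ⟨hm, hfm⟩⟩
end

section
/- For every k ≥ 1 there exists an injective function f : ℕ → ℕ that is k-monotonically increasing but not (k−1)-monotonically increasing. -/
/-- For every `k ≥ 1` there is an injective `f : ℕ → ℕ` that is
`k`-monotonically increasing but not `(k-1)`-monotonically increasing. -/
theorem stmt18 (k : ℕ) (hk : 1 ≤ k) :
    ∃ f : ℕ → ℕ, Function.Injective f ∧
      (∃ X : Fin k → Set ℕ, (⋃ i, X i) = Set.univ ∧ ∀ i, MonotoneOn f (X i)) ∧
      ¬ ∃ X : Fin (k - 1) → Set ℕ, (⋃ i, X i) = Set.univ ∧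
        ∀ i, MonotoneOn f (X i) := by
  have hkpos : 0 < k := hk
  set f : ℕ → ℕ := fun n => k * (n / k) + (k - 1 - n % k) with hf
  have hrem : ∀ n, k - 1 - n % k < k := by
    intro n
    calc k - 1 - n % k ≤ k - 1 := Nat.sub_le _ _
      _ < k := Nat.sub_lt hkpos one_pos
  have hdiv : ∀ n, f n / k = n / k := by
    intro n
    simp only [hf]
    rw [Nat.mul_add_div hkpos, Nat.div_eq_of_lt (hrem n), add_zero]
  have hmod : ∀ n, f n % k = k - 1 - n % k := by
    intro n
    simp only [hf]
    rw [Nat.add_comm, Nat.add_mul_mod_self_left, Nat.mod_eq_of_lt (hrem n)]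
  have hmodlt : ∀ n, n % k < k := fun n => Nat.mod_lt _ hkpos
  have hinj : Function.Injective f := by
    intro a b hab
    have h1 : a / k = b / k := by rw [← hdiv a, ← hdiv b, hab]
    have h2 : k - 1 - a % k = k - 1 - b % k := by rw [← hmod a, ← hmod b, hab]
    have ha := hmodlt a
    have hb := hmodlt b
    have h3 : a % k = b % k := by omega
    calc a = k * (a / k) + a % k := (Nat.div_add_mod a k).symm
      _ = k * (b / k) + b % k := by rw [h1, h3]
      _ = b := Nat.div_add_mod b k
  refine ⟨f, hinj, ⟨fun i => {n | n % k = i.val}, ?_, ?_⟩, ?_⟩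
  · ext n
    simp only [Set.mem_iUnion, Set.mem_setOf_eq, Set.mem_univ, iff_true]
    exact ⟨⟨n % k, hmodlt n⟩, rfl⟩
  · intro i a ha b hb hab
    simp only [Set.mem_setOf_eq] at ha hb
    have : a / k ≤ b / k := Nat.div_le_div_right hab
    simp only [hf, ha, hb]
    exact Nat.add_le_add (Nat.mul_le_mul_left _ this) le_rfl
  · rintro ⟨X, hcov, hmono⟩
    -- each of 0,...,k-1 lies in some X j; no two can share a set
    have hmem : ∀ i : Fin k, ∃ j, (i : ℕ) ∈ X j := by
      intro i
      have : (i : ℕ) ∈ ⋃ j, X j := hcov ▸ Set.mem_univ _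
      exact Set.mem_iUnion.mp this
    choose g hg using hmem
    have key : ∀ i i' : Fin k, (i : ℕ) < (i' : ℕ) → g i ≠ g i' := by
      intro i i' hlt hgeq
      have h1 := hg i
      have h2 := hg i'
      rw [hgeq] at h1
      have hle : f (i : ℕ) ≤ f (i' : ℕ) := hmono (g i') h1 h2 (le_of_lt hlt)
      have hik : (i : ℕ) < k := i.isLt
      have hik' : (i' : ℕ) < k := i'.isLt
      have e1 : f (i : ℕ) = k - 1 - (i : ℕ) := by
        simp [hf, Nat.div_eq_of_lt hik, Nat.mod_eq_of_lt hik]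
      have e2 : f (i' : ℕ) = k - 1 - (i' : ℕ) := by
        simp [hf, Nat.div_eq_of_lt hik', Nat.mod_eq_of_lt hik']
      omega
    have hginj : Function.Injective g := by
      intro i i' hgeq
      by_contra hne
      rcases lt_trichotomy (i : ℕ) (i' : ℕ) with h | h | h
      · exact key i i' h hgeq
      · exact hne (Fin.ext h)
      · exact key i' i h hgeq.symm
    have := Fintype.card_le_of_injective g hginj
    simp only [Fintype.card_fin] at this
    omega
end
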